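/- arXiv:1704.03509 — 2 statements merged into one kernel-verified Lean document; each statement's English description precedes it below -/
import Mathlib

section
/- For multiplicative characters A, A' of F_q and y ∈ F_q, one has Σ_λ (Ā' choose λ)·λ(-y) = (q-1)·ε(y)·Ā'(1-y), where the sum ranges over all multiplicative characters λ of F_q and ε is the trivial character extended by ε(0) = 0. -/
open scoped BigOperators Classical

noncomputable section

variable {F : Type*} [Field F] [Fintype F]

instance : Fintype (MulChar F ℂ) := Fintype.ofFinite _

/-- Jacobi-type sum `J(χ,λ) = Σ_u χ(u) λ(1-u)`. -/
def Jsum (A B : MulChar F ℂ) : ℂ := ∑ u : F, A u * B (1 - u)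

/-- Finite field binomial coefficient `(A choose B) = B(-1) J(A, B⁻¹)`. -/
def binom (A B : MulChar F ℂ) : ℂ := B (-1) * Jsum A B⁻¹

/-- Finite field Gauss hypergeometric `₂F₁(A,B;C|x)` (normalized as in the paper). -/
def H2F1 (A B C : MulChar F ℂ) (x : F) : ℂ :=
  (1 : MulChar F ℂ) x * (B * C) (-1) *
    ∑ y : F, B y * (B⁻¹ * C) (1 - y) * A⁻¹ (1 - x * y)

/-- Finite field `₃F₂`. -/
def H3F2 (A0 A1 A2 B1 B2 : MulChar F ℂ) (x : F) : ℂ :=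
  (1 / ((Fintype.card F : ℂ) - 1)) *
    ∑ χ : MulChar F ℂ, binom (A0 * χ) χ * binom (A1 * χ) (B1 * χ) *
      binom (A2 * χ) (B2 * χ) * χ x

/-- Finite field Appell series `F₃`. -/
def AF3 (A A' B B' C : MulChar F ℂ) (x y : F) : ℂ :=
  (1 : MulChar F ℂ) (x * y) * B (-1) * B' (-1) *
    ∑ u : F, ∑ v : F, B u * B' v * (C * B⁻¹ * B'⁻¹) (1 - u - v) *
      A⁻¹ (1 - u * x) * A'⁻¹ (1 - v * y)

lemma sum_chars (a : F) :
    ∑ χ : MulChar F ℂ, χ a = if a = 1 then ((Fintype.card F : ℂ) - 1) else 0 := by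
  split_ifs with ha
  · subst ha
    simp only [map_one, Finset.sum_const, Finset.card_univ, nsmul_eq_mul, mul_one]
    have h1 : Fintype.card (MulChar F ℂ) = Fintype.card Fˣ := by
      rw [← Nat.card_eq_fintype_card, ← Nat.card_eq_fintype_card]
      exact MulChar.card_eq_card_units_of_hasEnoughRootsOfUnity F ℂ
    rw [h1, Fintype.card_units, Nat.cast_sub Fintype.card_pos, Nat.cast_one]
  · by_cases hu : IsUnit a
    · obtain ⟨χ, hχ⟩ := MulChar.exists_apply_ne_one_of_hasEnoughRootsOfUnity F ℂ ha
      refine eq_zero_of_mul_eq_self_left hχ ?_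
      simp only [Finset.mul_sum, ← MulChar.mul_apply]
      exact Fintype.sum_bijective _ (Group.mulLeft_bijective χ) _ _ fun χ' ↦ rfl
    · exact Finset.sum_eq_zero fun χ _ ↦ χ.map_nonunit hu

theorem sum_binom_eval (A' : MulChar F ℂ) (y : F) :
    ∑ fl : MulChar F ℂ, binom A'⁻¹ fl * fl (-y) =
      ((Fintype.card F : ℂ) - 1) * (1 : MulChar F ℂ) y * A'⁻¹ (1 - y) := by
  by_cases hy : y = 0
  · subst hy
    simp [binom, MulChar.map_zero]
  · have key : ∀ (χ : MulChar F ℂ) (u : F),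
        χ (-1) * χ⁻¹ (1 - u) * χ (-y) = χ (y * Ring.inverse (1 - u)) := by
      intro χ u
      have h2 : χ (-1) * χ (-y) = χ y := by rw [← map_mul, neg_mul_neg, one_mul]
      rw [mul_right_comm, h2, MulChar.inv_apply, ← map_mul, mul_comm]
    calc ∑ fl : MulChar F ℂ, binom A'⁻¹ fl * fl (-y)
        = ∑ u : F, ∑ fl : MulChar F ℂ, A'⁻¹ u * fl (y * Ring.inverse (1 - u)) := by
          rw [Finset.sum_comm]
          refine Finset.sum_congr rfl fun fl _ ↦ ?_
          rw [binom, Jsum, Finset.mul_sum, Finset.sum_mul]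
          refine Finset.sum_congr rfl fun u _ ↦ ?_
          rw [← key fl u]; ring
      _ = ∑ u : F, A'⁻¹ u *
            (if y * Ring.inverse (1 - u) = 1 then ((Fintype.card F : ℂ) - 1) else 0) := by
          refine Finset.sum_congr rfl fun u _ ↦ ?_
          rw [← Finset.mul_sum, sum_chars]
      _ = ((Fintype.card F : ℂ) - 1) * (1 : MulChar F ℂ) y * A'⁻¹ (1 - y) := by
          have hcond : ∀ u : F, (y * Ring.inverse (1 - u) = 1) ↔ u = 1 - y := by
            intro u
            constructor
            · intro h
              by_cases h1 : 1 - u = 0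
              · simp [h1, Ring.inverse_zero] at h
              · rw [Ring.inverse_eq_inv] at h
                field_simp at h
                linear_combination h
            · rintro rfl
              simp only [sub_sub_cancel, Ring.inverse_eq_inv]
              field_simp
          simp only [hcond, mul_ite, mul_zero]
          rw [Finset.sum_ite_eq' Finset.univ (1 - y)
            (fun u ↦ A'⁻¹ u * ((Fintype.card F : ℂ) - 1))]
          simp only [Finset.mem_univ, if_true]
          have h1 : (1 : MulChar F ℂ) y = 1 := by
            have := MulChar.one_apply_coe (R' := ℂ) (Ne.isUnit hy).unit
            rwa [IsUnit.unit_spec] at this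
          rw [h1]; ring
end
end

section
/- Reduction formula for F3 with A' trivial: let A, B, B', C be multiplicative characters of F_q and x ∈ F_q, y ∈ F_q*. Then F3(A, ε; B, B'; C; x, y) = C(-1)B'(-1)·(B·C̄ choose B̄')·2F1(A, B; C | x) - (C̄·B')(x)·δ(y-1)·B'(-1)·(Ā choose C̄·B') - B'(-1)·C̄(y)·(B̄'·C)(1-y)·2F1(A, B; C·B̄' | -x(1-y)/y) + (q-1)·ε(x)·C(-1)·δ(B·C̄)·Ā(1-x), where δ(z) = 1 if z = 0 (resp. δ(χ) = 1 if χ = ε) and 0 otherwise. -/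
open scoped BigOperators Classical

noncomputable section

variable {F : Type*} [Field F] [Fintype F]

set_option linter.unusedSectionVars false

private lemma mc_sq (χ : MulChar F ℂ) : χ (-1) * χ (-1) = 1 := by
  rw [← map_mul, neg_mul_neg, one_mul, map_one]

private lemma mc_inv_neg (χ : MulChar F ℂ) : χ⁻¹ (-1) = χ (-1) := by
  rw [MulChar.inv_apply', inv_neg, inv_one]

private lemma mc_one_apply (a : F) : (1 : MulChar F ℂ) a = if a = 0 then 0 else 1 := by
  split
  · next h => rw [h]; exact MulChar.map_zero _
  · next h => exact MulChar.one_apply (isUnit_iff_ne_zero.mpr h)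

private lemma mc_inv_mul_self (χ : MulChar F ℂ) {a : F} (ha : a ≠ 0) :
    χ⁻¹ a * χ a = 1 := by
  rw [MulChar.inv_apply', ← map_mul, inv_mul_cancel₀ ha, map_one]

private lemma sum_mc (χ : MulChar F ℂ) :
    ∑ a : F, χ a = if χ = 1 then (Fintype.card F : ℂ) - 1 else 0 := by
  split
  · next h =>
    subst h
    have h1 : ∀ a : F, (1 : MulChar F ℂ) a = 1 - (if a = 0 then (1:ℂ) else 0) := by
      intro a; rw [mc_one_apply]; split <;> ring
    rw [Finset.sum_congr rfl fun a _ => h1 a, Finset.sum_sub_distrib,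
      Finset.sum_ite_eq' Finset.univ (0:F) (fun _ => (1:ℂ))]
    simp [Finset.card_univ]
  · next h => exact MulChar.sum_eq_zero_of_ne_one h

/-- translation: `∑ χ(u) μ(c-u) g(u) = χ(c)μ(c) ∑ χ(t)μ(1-t) g(ct)` for `c ≠ 0`. -/
private lemma sum_shift (χ μ : MulChar F ℂ) (g : F → ℂ) {c : F} (hc : c ≠ 0) :
    ∑ u : F, χ u * μ (c - u) * g u
      = χ c * μ c * ∑ t : F, χ t * μ (1 - t) * g (c * t) := by
  calc ∑ u : F, χ u * μ (c - u) * g u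
      = ∑ t : F, χ (c * t) * μ (c - c * t) * g (c * t) :=
        (Fintype.sum_equiv (Equiv.mulLeft₀ c hc)
          (fun t => χ (c*t) * μ (c - c*t) * g (c*t))
          (fun u => χ u * μ (c - u) * g u) (fun t => rfl)).symm
    _ = ∑ t : F, χ c * μ c * (χ t * μ (1 - t) * g (c * t)) := by
        refine Finset.sum_congr rfl fun t _ => ?_
        have h1 : c - c * t = c * (1 - t) := by ring
        rw [h1, map_mul, map_mul]; ring
    _ = _ := by rw [Finset.mul_sum]

private lemma sum_affine {x : F} (hx : x ≠ 0) (f : F → ℂ) :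
    ∑ t : F, f t = ∑ u : F, f (1 - u * x) :=
  (Fintype.sum_equiv ((Equiv.mulRight₀ x hx).trans (Equiv.subLeft 1))
    (fun u => f (1 - u * x)) f (fun u => by simp [Equiv.subLeft])).symm

private lemma Jsum_reflect (χ μ : MulChar F ℂ) :
    Jsum μ χ = χ (-1) * Jsum χ (χ⁻¹ * μ⁻¹) := by
  unfold Jsum
  rw [Finset.mul_sum]
  refine Fintype.sum_equiv
    ⟨fun s => 1 - s⁻¹, fun u => (1 - u)⁻¹, ?_, ?_⟩ _ _ fun s => ?_
  · intro s
    by_cases h : s = 0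
    · simp [h]
    · simp [sub_sub_cancel, inv_inv]
  · intro u; simp [sub_sub_cancel, inv_inv]
  show μ s * χ (1 - s) = χ (-1) * (χ (1 - s⁻¹) * (χ⁻¹ * μ⁻¹) (1 - (1 - s⁻¹)))
  by_cases hs : s = 0
  · subst hs
    simp [MulChar.map_zero]
  · have h1 : (1:F) - (1 - s⁻¹) = s⁻¹ := by ring
    have h2 : (1 : F) - s⁻¹ = -1 * (1 - s) * s⁻¹ := by field_simp; ring
    rw [h1, h2, map_mul, map_mul, MulChar.mul_apply, MulChar.inv_apply',
      MulChar.inv_apply', inv_inv]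
    have h3 : χ s⁻¹ * χ s = 1 := by rw [← map_mul, inv_mul_cancel₀ hs, map_one]
    have h4 := mc_sq χ
    calc μ s * χ (1 - s)
        = (χ (-1) * χ (-1)) * (χ s⁻¹ * χ s) * (μ s * χ (1 - s)) := by rw [h3, h4]; ring
      _ = _ := by ring

theorem AF3_Aprime_trivial (A B B' C : MulChar F ℂ) (x y : F) (hy : y ≠ 0) :
    AF3 A 1 B B' C x y =
      C (-1) * B' (-1) * binom (B * C⁻¹) B'⁻¹ * H2F1 A B C x -
      (C⁻¹ * B') x * (if y - 1 = 0 then 1 else 0) * B' (-1) * binom A⁻¹ (C⁻¹ * B') -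
      B' (-1) * C⁻¹ y * (B'⁻¹ * C) (1 - y) *
        H2F1 A B (C * B'⁻¹) (-(x * (1 - y)) / y) +
      ((Fintype.card F : ℂ) - 1) * (1 : MulChar F ℂ) x * C (-1) * (if B * C⁻¹ = 1 then 1 else 0) *
        A⁻¹ (1 - x) := by
  classical
  have hεxy : (1 : MulChar F ℂ) (x * y) = (1 : MulChar F ℂ) x := by
    rw [mc_one_apply, mc_one_apply]
    simp [mul_eq_zero, hy]
  have hDneg : (C * B⁻¹ * B'⁻¹) (-1) = C (-1) * B (-1) * B' (-1) := by
    rw [MulChar.mul_apply, MulChar.mul_apply, mc_inv_neg, mc_inv_neg]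
  have hsplitv : ∀ f : F → ℂ,
      (∑ v : F, f v * (1 : MulChar F ℂ) (1 - v * y)) = (∑ v : F, f v) - f y⁻¹ := by
    intro f
    have h1 : ∀ v : F, f v * (1 : MulChar F ℂ) (1 - v * y)
        = f v - (if v = y⁻¹ then f y⁻¹ else 0) := by
      intro v
      by_cases hv : v = y⁻¹
      · subst hv
        rw [if_pos rfl, mc_one_apply,
          if_pos (by rw [inv_mul_cancel₀ hy, sub_self])]
        ring
      · have hne : (1:F) - v * y ≠ 0 :=
          fun h => hv (eq_inv_of_mul_eq_one_left (sub_eq_zero.mp h).symm)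
        rw [if_neg hv, mc_one_apply, if_neg hne]
        ring
    rw [Finset.sum_congr rfl fun v _ => h1 v, Finset.sum_sub_distrib,
      Finset.sum_ite_eq' Finset.univ (y⁻¹ : F) (fun _ => f y⁻¹)]
    simp
  have hAF3 : AF3 A 1 B B' C x y
      = (1 : MulChar F ℂ) x * B (-1) * B' (-1) *
        ((∑ u : F, ∑ v : F, B u * B' v * (C * B⁻¹ * B'⁻¹) (1 - u - v) * A⁻¹ (1 - u * x))
          - ∑ u : F, B u * B' y⁻¹ * (C * B⁻¹ * B'⁻¹) (1 - u - y⁻¹) * A⁻¹ (1 - u * x)) := by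
    simp only [AF3, inv_one]
    rw [hεxy, ← Finset.sum_sub_distrib]
    congr 1
    refine Finset.sum_congr rfl fun u _ => ?_
    exact hsplitv fun v => B u * B' v * (C * B⁻¹ * B'⁻¹) (1 - u - v) * A⁻¹ (1 - u * x)
  have hT1 : (∑ u : F, ∑ v : F, B u * B' v * (C * B⁻¹ * B'⁻¹) (1 - u - v) * A⁻¹ (1 - u * x))
      = Jsum B' (C * B⁻¹ * B'⁻¹) * (∑ u : F, B u * (B⁻¹ * C) (1 - u) * A⁻¹ (1 - x * u))
        + ((Fintype.card F : ℂ) - 1) * (if B * C⁻¹ = 1 then (1:ℂ) else 0)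
          * (C (-1) * B (-1) * B' (-1)) * A⁻¹ (1 - x) := by
    simp only [Jsum]
    have hstep : ∀ u : F,
        (∑ v : F, B u * B' v * (C * B⁻¹ * B'⁻¹) (1 - u - v) * A⁻¹ (1 - u * x))
        = (∑ t : F, B' t * (C * B⁻¹ * B'⁻¹) (1 - t))
            * (B u * (B⁻¹ * C) (1 - u) * A⁻¹ (1 - x * u))
          + (if u = 1 then ((Fintype.card F : ℂ) - 1) * (if B * C⁻¹ = 1 then (1:ℂ) else 0)
              * (C (-1) * B (-1) * B' (-1)) * A⁻¹ (1 - x) else 0) := by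
      intro u
      by_cases hu : u = 1
      · subst hu
        rw [if_pos rfl]
        have h0 : ∀ v : F, B 1 * B' v * (C * B⁻¹ * B'⁻¹) (1 - 1 - v) * A⁻¹ (1 - 1 * x)
            = ((C * B⁻¹ * B'⁻¹) (-1) * A⁻¹ (1 - x)) * ((B' * (C * B⁻¹ * B'⁻¹)) v) := by
          intro v
          have h1 : (1:F) - 1 - v = -1 * v := by ring
          have h2 : (1:F) - 1 * x = 1 - x := by ring
          have hB1 : B (1:F) = 1 := map_one B
          have hm : B' v * (C * B⁻¹ * B'⁻¹) v = (B' * (C * B⁻¹ * B'⁻¹)) v :=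
            (MulChar.mul_apply _ _ v).symm
          rw [h1, h2, map_mul]
          linear_combination (A⁻¹ (1 - x) * (C * B⁻¹ * B'⁻¹) (-1) * B' v
              * (C * B⁻¹ * B'⁻¹) v) * hB1
            + ((C * B⁻¹ * B'⁻¹) (-1) * A⁻¹ (1 - x)) * hm
        rw [Finset.sum_congr rfl fun v _ => h0 v, ← Finset.mul_sum, sum_mc]
        have h3 : (B' * (C * B⁻¹ * B'⁻¹) = 1) = (B * C⁻¹ = 1) := by
          have hg : B' * (C * B⁻¹ * B'⁻¹) = B⁻¹ * C := by
            simp [mul_comm, mul_left_comm]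
          rw [hg, inv_mul_eq_one, mul_inv_eq_one]
        simp only [h3]
        have h4 : (B⁻¹ * C) ((1:F) - 1) = 0 := by rw [sub_self]; exact MulChar.map_zero _
        rw [h4]
        by_cases hbc : B * C⁻¹ = 1
        · rw [if_pos hbc, if_pos hbc, hDneg]; ring
        · rw [if_neg hbc, if_neg hbc]; ring
      · rw [if_neg hu, add_zero]
        have hcne : (1:F) - u ≠ 0 := sub_ne_zero.mpr (fun h => hu h.symm)
        have h0 : ∀ v : F, B u * B' v * (C * B⁻¹ * B'⁻¹) (1 - u - v) * A⁻¹ (1 - u * x)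
            = B' v * (C * B⁻¹ * B'⁻¹) ((1 - u) - v) * (B u * A⁻¹ (1 - u * x)) := by
          intro v
          have h1 : (1:F) - u - v = (1 - u) - v := by ring
          rw [h1]; ring
        rw [Finset.sum_congr rfl fun v _ => h0 v,
          sum_shift B' (C * B⁻¹ * B'⁻¹) (fun _ => B u * A⁻¹ (1 - u * x)) hcne,
          ← Finset.sum_mul]
        have h2 : B' (1 - u) * (C * B⁻¹ * B'⁻¹) (1 - u) = (B⁻¹ * C) (1 - u) := by
          rw [← MulChar.mul_apply]
          have hg : B' * (C * B⁻¹ * B'⁻¹) = B⁻¹ * C := by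
            simp [mul_comm, mul_left_comm]
          rw [hg]
        rw [mul_comm u x, h2]
        ring
    rw [Finset.sum_congr rfl fun u _ => hstep u, Finset.sum_add_distrib, ← Finset.mul_sum,
      Finset.sum_ite_eq' Finset.univ (1:F)
        (fun _ => ((Fintype.card F : ℂ) - 1) * (if B * C⁻¹ = 1 then (1:ℂ) else 0)
          * (C (-1) * B (-1) * B' (-1)) * A⁻¹ (1 - x)),
      if_pos (Finset.mem_univ (1:F))]
  have hbinom1 : binom (B * C⁻¹) B'⁻¹ = Jsum B' (C * B⁻¹ * B'⁻¹) := by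
    unfold binom
    rw [inv_inv, mc_inv_neg, Jsum_reflect B' (B * C⁻¹)]
    have hχ : B'⁻¹ * (B * C⁻¹)⁻¹ = C * B⁻¹ * B'⁻¹ := by
      simp [mul_comm, mul_left_comm, mul_assoc]
    rw [hχ, ← mul_assoc, mc_sq B', one_mul]
  rw [hAF3, hT1, hbinom1]
  simp only [H2F1]
  set S1 : ℂ := ∑ u : F, B u * (B⁻¹ * C) (1 - u) * A⁻¹ (1 - x * u) with hS1def
  set JB : ℂ := Jsum B' (C * B⁻¹ * B'⁻¹) with hJBdef
  have hM1 : (1 : MulChar F ℂ) x * B (-1) * B' (-1) * (JB * S1)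
      = C (-1) * B' (-1) * JB * ((1 : MulChar F ℂ) x * (B * C) (-1) * S1) := by
    rw [MulChar.mul_apply]
    linear_combination (-((1 : MulChar F ℂ) x * B (-1) * B' (-1) * JB * S1)) * mc_sq C
  have hM4 : (1 : MulChar F ℂ) x * B (-1) * B' (-1) *
        (((Fintype.card F : ℂ) - 1) * (if B * C⁻¹ = 1 then (1:ℂ) else 0)
          * (C (-1) * B (-1) * B' (-1)) * A⁻¹ (1 - x))
      = ((Fintype.card F : ℂ) - 1) * (1 : MulChar F ℂ) x * C (-1)
          * (if B * C⁻¹ = 1 then (1:ℂ) else 0) * A⁻¹ (1 - x) := by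
    linear_combination
      (((Fintype.card F : ℂ) - 1) * (if B * C⁻¹ = 1 then (1:ℂ) else 0) * (1 : MulChar F ℂ) x
        * A⁻¹ (1 - x) * C (-1) * B' (-1) * B' (-1)) * mc_sq B
      + (((Fintype.card F : ℂ) - 1) * (if B * C⁻¹ = 1 then (1:ℂ) else 0) * (1 : MulChar F ℂ) x
        * A⁻¹ (1 - x) * C (-1)) * mc_sq B'
  by_cases hy1 : y = 1
  · subst hy1
    simp only [inv_one, sub_self, MulChar.map_zero, map_one, mul_one, one_mul, mul_zero,
      zero_mul, sub_zero, neg_zero, zero_div, eq_self_iff_true, if_true]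
    have hbinom2 : binom A⁻¹ (C⁻¹ * B') = (C (-1) * B' (-1)) * Jsum A⁻¹ (C * B'⁻¹) := by
      unfold binom
      have hχ : (C⁻¹ * B')⁻¹ = C * B'⁻¹ := by rw [mul_inv, inv_inv]
      rw [hχ, MulChar.mul_apply, mc_inv_neg]
    have hT2' : (∑ u : F, B u * (C * B⁻¹ * B'⁻¹) (1 - u - 1) * A⁻¹ (1 - u * x))
        = (C * B⁻¹ * B'⁻¹) (-1) * ∑ u : F, (C * B'⁻¹) u * A⁻¹ (1 - u * x) := by
      have h0 : ∀ u : F, B u * (C * B⁻¹ * B'⁻¹) (1 - u - 1) * A⁻¹ (1 - u * x)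
          = (C * B⁻¹ * B'⁻¹) (-1) * ((C * B'⁻¹) u * A⁻¹ (1 - u * x)) := by
        intro u
        have h1 : (1:F) - u - 1 = -1 * u := by ring
        rw [h1, map_mul]
        have h2 : B u * (C * B⁻¹ * B'⁻¹) u = (C * B'⁻¹) u := by
          rw [← MulChar.mul_apply]
          have hψ : B * (C * B⁻¹ * B'⁻¹) = C * B'⁻¹ := by
            rw [mul_comm C B⁻¹, mul_assoc B⁻¹ C B'⁻¹, ← mul_assoc B B⁻¹ (C * B'⁻¹),
              mul_inv_cancel, one_mul]
          rw [hψ]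
        linear_combination ((C * B⁻¹ * B'⁻¹) (-1) * A⁻¹ (1 - u * x)) * h2
      rw [Finset.sum_congr rfl fun u _ => h0 u, ← Finset.mul_sum]
    rw [hT2', hDneg, hbinom2]
    set Sψ : ℂ := ∑ u : F, (C * B'⁻¹) u * A⁻¹ (1 - u * x) with hSψdef
    set JA : ℂ := Jsum A⁻¹ (C * B'⁻¹) with hJAdef
    have hM2 : (1 : MulChar F ℂ) x * Sψ = (C⁻¹ * B') x * JA := by
      rw [hSψdef, hJAdef]
      by_cases hx : x = 0
      · subst hx
        rw [MulChar.map_zero, MulChar.map_zero, zero_mul, zero_mul]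
      · rw [MulChar.one_apply (isUnit_iff_ne_zero.mpr hx), one_mul]
        unfold Jsum
        rw [show (∑ u : F, A⁻¹ u * (C * B'⁻¹) (1 - u))
            = ∑ u : F, A⁻¹ (1 - u * x) * (C * B'⁻¹) (1 - (1 - u * x)) from
          sum_affine hx _]
        have h1 : ∀ u : F, A⁻¹ (1 - u * x) * (C * B'⁻¹) (1 - (1 - u * x))
            = ((C * B'⁻¹) u * A⁻¹ (1 - u * x)) * (C * B'⁻¹) x := by
          intro u
          have h2 : (1:F) - (1 - u * x) = u * x := by ring
          rw [h2, map_mul]; ring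
        rw [Finset.sum_congr rfl fun u _ => h1 u, ← Finset.sum_mul]
        have h3 : (C⁻¹ * B') x * (C * B'⁻¹) x = 1 := by
          have h4 : C⁻¹ * B' = (C * B'⁻¹)⁻¹ := by simp [mul_comm]
          rw [h4]; exact mc_inv_mul_self _ hx
        linear_combination (-(∑ u : F, (C * B'⁻¹) u * A⁻¹ (1 - u * x))) * h3
    have hM2' : (1 : MulChar F ℂ) x * B (-1) * B' (-1)
          * ((C (-1) * B (-1) * B' (-1)) * Sψ)
        = (C⁻¹ * B') x * B' (-1) * ((C (-1) * B' (-1)) * JA) := by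
      linear_combination (C (-1) * B' (-1) * B' (-1) * B (-1) * B (-1)) * hM2
        + (C (-1) * B' (-1) * B' (-1) * ((C⁻¹ * B') x) * JA) * mc_sq B
    linear_combination hM1 - hM2' + hM4
  · have hsub : y - 1 ≠ 0 := sub_ne_zero.mpr hy1
    rw [if_neg hsub]
    have h1y : (1:F) - y ≠ 0 := sub_ne_zero.mpr (fun h => hy1 h.symm)
    have hεz : (1 : MulChar F ℂ) (-(x * (1 - y)) / y) = (1 : MulChar F ℂ) x := by
      rw [mc_one_apply, mc_one_apply]
      have hiff : (-(x * (1 - y)) / y = 0) ↔ (x = 0) := by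
        rw [div_eq_zero_iff, neg_eq_zero, mul_eq_zero]
        simp [hy, h1y]
      simp only [hiff]
    have hcne : (1:F) - y⁻¹ ≠ 0 := by
      intro h
      exact hy1 (inv_eq_one.mp (sub_eq_zero.mp h).symm)
    have hT2 : (∑ u : F, B u * B' y⁻¹ * (C * B⁻¹ * B'⁻¹) (1 - u - y⁻¹) * A⁻¹ (1 - u * x))
        = B (1 - y⁻¹) * (C * B⁻¹ * B'⁻¹) (1 - y⁻¹) * B' y⁻¹ *
          ∑ t : F, B t * (B⁻¹ * (C * B'⁻¹)) (1 - t)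
            * A⁻¹ (1 - (-(x * (1 - y)) / y) * t) := by
      have h0 : ∀ u : F, B u * B' y⁻¹ * (C * B⁻¹ * B'⁻¹) (1 - u - y⁻¹) * A⁻¹ (1 - u * x)
          = B u * (C * B⁻¹ * B'⁻¹) ((1 - y⁻¹) - u) * (B' y⁻¹ * A⁻¹ (1 - u * x)) := by
        intro u
        have h1 : (1:F) - u - y⁻¹ = (1 - y⁻¹) - u := by ring
        rw [h1]; ring
      rw [Finset.sum_congr rfl fun u _ => h0 u,
        sum_shift B (C * B⁻¹ * B'⁻¹) (fun u => B' y⁻¹ * A⁻¹ (1 - u * x)) hcne]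
      have h2 : ∀ t : F, B t * (C * B⁻¹ * B'⁻¹) (1 - t)
            * (B' y⁻¹ * A⁻¹ (1 - (1 - y⁻¹) * t * x))
          = (B t * (B⁻¹ * (C * B'⁻¹)) (1 - t)
              * A⁻¹ (1 - (-(x * (1 - y)) / y) * t)) * B' y⁻¹ := by
        intro t
        have h3 : (1:F) - (1 - y⁻¹) * t * x = 1 - (-(x * (1 - y)) / y) * t := by
          field_simp
          ring
        have h4 : (C * B⁻¹ * B'⁻¹) (1 - t) = (B⁻¹ * (C * B'⁻¹)) (1 - t) := by
          have hg : C * B⁻¹ * B'⁻¹ = B⁻¹ * (C * B'⁻¹) := by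
            simp [mul_comm, mul_left_comm, mul_assoc]
          rw [hg]
        rw [h3, h4]; ring
      rw [Finset.sum_congr rfl fun t _ => h2 t, ← Finset.sum_mul]
      ring
    rw [hεz, hT2]
    set S2 : ℂ := ∑ t : F, B t * (B⁻¹ * (C * B'⁻¹)) (1 - t)
        * A⁻¹ (1 - (-(x * (1 - y)) / y) * t) with hS2def
    have hone : B'⁻¹ y * B' y = 1 := mc_inv_mul_self B' hy
    have hM3 : (1 : MulChar F ℂ) x * B (-1) * B' (-1)
          * (B (1 - y⁻¹) * (C * B⁻¹ * B'⁻¹) (1 - y⁻¹) * B' y⁻¹)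
        = B' (-1) * C⁻¹ y * (B'⁻¹ * C) (1 - y)
          * ((1 : MulChar F ℂ) x * (B * (C * B'⁻¹)) (-1)) := by
      have h1 : B (1 - y⁻¹) * (C * B⁻¹ * B'⁻¹) (1 - y⁻¹) = (C * B'⁻¹) (1 - y⁻¹) := by
        rw [← MulChar.mul_apply]
        have hψ : B * (C * B⁻¹ * B'⁻¹) = C * B'⁻¹ := by
          rw [mul_comm C B⁻¹, mul_assoc B⁻¹ C B'⁻¹, ← mul_assoc B B⁻¹ (C * B'⁻¹),
            mul_inv_cancel, one_mul]
        rw [hψ]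
      rw [h1]
      have hcval : (1:F) - y⁻¹ = (-1) * (1 - y) * y⁻¹ := by
        field_simp
        ring
      rw [hcval, map_mul, map_mul]
      simp only [MulChar.mul_apply, mc_inv_neg]
      have hB'y : B'⁻¹ y⁻¹ = B' y := by rw [MulChar.inv_apply', inv_inv]
      have hCy : C y⁻¹ = C⁻¹ y := (MulChar.inv_apply' C y).symm
      have hB'2 : B' y⁻¹ = B'⁻¹ y := (MulChar.inv_apply' B' y).symm
      rw [hB'y, hCy, hB'2]
      linear_combination ((1 : MulChar F ℂ) x * B (-1) * B' (-1) * B' (-1) * C (-1)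
        * C (1 - y) * B'⁻¹ (1 - y) * C⁻¹ y) * hone
    linear_combination hM1 + hM4 - S2 * hM3

end
end
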